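/- A scalar function h : ℝᵐ × ℝᵐ → ℝ is isotropic (i.e. h(Qa, Qb) = h(a, b) for all orthogonal Q and all a, b) if and only if there exists a function H : ℝ × ℝ × ℝ → ℝ such that h(a, b) = H(a·a, b·b, a·b) for all a, b. -/

import Mathlib

/-!
An isotropic `h` is constant on the fibres of `(a, b) ↦ (a ⬝ᵥ a, b ⬝ᵥ b, a ⬝ᵥ b)`, hence factors
through this map. Indeed, if `(a, b)` and `(a', b')` have the same Gram matrix, then
`c₀ a + c₁ b ↦ c₀ a' + c₁ b'` is a well-defined isometry of `span {a, b}` into `ℝᵐ`, because the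
norm of a linear combination is determined by the Gram matrix; it extends to an isometry of `ℝᵐ`,
whose matrix is orthogonal.
-/

open Matrix

section

variable {𝕜 M E : Type*} [RCLike 𝕜] [AddCommGroup M] [Module 𝕜 M]
  [NormedAddCommGroup E] [InnerProductSpace 𝕜 E] [FiniteDimensional 𝕜 E]

open LinearMap in
theorem LinearMap.exists_linearIsometryEquiv_apply_eq_of_norm_eq (F G : M →ₗ[𝕜] E)
    (h : ∀ x, ‖F x‖ = ‖G x‖) : ∃ f : E ≃ₗᵢ[𝕜] E, ∀ x, f (F x) = G x := by
  have hker : ker F ≤ ker G := fun x hx => by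
    rw [mem_ker, ← norm_eq_zero, ← h, norm_eq_zero]
    exact hx
  let L : range F →ₗ[𝕜] E := (ker F).liftQ G hker ∘ₗ F.quotKerEquivRange.symm
  have hL : ∀ x, L ⟨F x, mem_range_self F x⟩ = G x := fun x => by
    simp only [L, coe_comp, LinearEquiv.coe_coe, Function.comp_apply,
      quotKerEquivRange_symm_apply_image, Submodule.mkQ_apply, Submodule.liftQ_apply]
  have hLnorm : ∀ y, ‖L y‖ = ‖y‖ := by
    rintro ⟨_, x, rfl⟩
    rw [hL]
    exact (h x).symm
  let Li : range F →ₗᵢ[𝕜] E := ⟨L, hLnorm⟩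
  refine ⟨Li.extend.toLinearIsometryEquiv rfl, fun x => ?_⟩
  rw [LinearIsometry.toLinearIsometryEquiv_apply]
  exact (Li.extend_apply ⟨F x, mem_range_self F x⟩).trans (hL x)

theorem exists_linearIsometryEquiv_apply_eq_of_inner_eq {ι : Type*} [Fintype ι] (v w : ι → E)
    (h : ∀ i j, inner 𝕜 (v i) (v j) = inner 𝕜 (w i) (w j)) :
    ∃ f : E ≃ₗᵢ[𝕜] E, ∀ i, f (v i) = w i := by
  classical
  set F := Fintype.linearCombination 𝕜 v
  set G := Fintype.linearCombination 𝕜 w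
  have hinner : ∀ c, inner 𝕜 (F c) (F c) = inner 𝕜 (G c) (G c) := fun c => by
    simp only [F, G, Fintype.linearCombination_apply, sum_inner, inner_sum, inner_smul_left,
      inner_smul_right, h]
  obtain ⟨f, hf⟩ := F.exists_linearIsometryEquiv_apply_eq_of_norm_eq G fun c => by
    rw [@norm_eq_sqrt_re_inner 𝕜, @norm_eq_sqrt_re_inner 𝕜, hinner]
  refine ⟨f, fun i => ?_⟩
  simpa [F, G, Fintype.linearCombination_apply_single] using hf (Pi.single i 1)

end

namespace Matrix

variable {n : Type*} [Fintype n] [DecidableEq n]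

theorem dotProduct_mulVec_mulVec_of_mem_orthogonalGroup {Q : Matrix n n ℝ}
    (hQ : Q ∈ orthogonalGroup n ℝ) (a b : n → ℝ) : (Q *ᵥ a) ⬝ᵥ (Q *ᵥ b) = a ⬝ᵥ b := by
  rw [dotProduct_mulVec, ← vecMul_transpose, vecMul_vecMul, (mem_orthogonalGroup_iff' n ℝ).mp hQ,
    vecMul_one]

theorem toEuclideanLin_symm_mem_orthogonalGroup
    (f : EuclideanSpace ℝ n ≃ₗᵢ[ℝ] EuclideanSpace ℝ n) :
    toEuclideanLin.symm f.toLinearMap ∈ orthogonalGroup n ℝ := by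
  rw [toEuclideanLin_eq_toLin_orthonormal]
  exact f.toMatrix_mem_unitaryGroup (EuclideanSpace.basisFun n ℝ) (EuclideanSpace.basisFun n ℝ)

theorem exists_mem_orthogonalGroup_mulVec_eq {ι : Type*} [Fintype ι] (v w : ι → n → ℝ)
    (h : ∀ i j, v i ⬝ᵥ v j = w i ⬝ᵥ w j) :
    ∃ Q ∈ orthogonalGroup n ℝ, ∀ i, Q *ᵥ v i = w i := by
  obtain ⟨f, hf⟩ := exists_linearIsometryEquiv_apply_eq_of_inner_eq (𝕜 := ℝ)
    (WithLp.toLp 2 ∘ v) (WithLp.toLp 2 ∘ w) fun i j => by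
      simp [EuclideanSpace.inner_toLp_toLp, dotProduct_comm, h]
  refine ⟨_, toEuclideanLin_symm_mem_orthogonalGroup f, fun i => ?_⟩
  change (toEuclideanLin (toEuclideanLin.symm f.toLinearMap) (WithLp.toLp 2 (v i))).ofLp = w i
  rw [LinearEquiv.apply_symm_apply]
  exact congrArg WithLp.ofLp (hf i)

theorem exists_mem_orthogonalGroup_mulVec_eq_of_dotProduct_eq {a b a' b' : n → ℝ}
    (haa : a ⬝ᵥ a = a' ⬝ᵥ a') (hbb : b ⬝ᵥ b = b' ⬝ᵥ b') (hab : a ⬝ᵥ b = a' ⬝ᵥ b') :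
    ∃ Q ∈ orthogonalGroup n ℝ, Q *ᵥ a = a' ∧ Q *ᵥ b = b' := by
  obtain ⟨Q, hQ, hQv⟩ := exists_mem_orthogonalGroup_mulVec_eq ![a, b] ![a', b'] <| by
    simp [Fin.forall_fin_two, dotProduct_comm b a, dotProduct_comm b' a', haa, hbb, hab]
  exact ⟨Q, hQ, hQv 0, hQv 1⟩

end Matrix

theorem isotropic_iff_function_of_invariants_general
    (m : ℕ) (h : (Fin m → ℝ) → (Fin m → ℝ) → ℝ) :
    (∀ Q : Matrix (Fin m) (Fin m) ℝ, Qᵀ * Q = 1 →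
        ∀ a b : Fin m → ℝ, h (Q.mulVec a) (Q.mulVec b) = h a b) ↔
      (∃ H : ℝ → ℝ → ℝ → ℝ, ∀ a b : Fin m → ℝ, h a b = H (a ⬝ᵥ a) (b ⬝ᵥ b) (a ⬝ᵥ b)) := by
  constructor
  · intro hiso
    let invariants : (Fin m → ℝ) × (Fin m → ℝ) → ℝ × ℝ × ℝ :=
      fun p => (p.1 ⬝ᵥ p.1, p.2 ⬝ᵥ p.2, p.1 ⬝ᵥ p.2)
    have hfactor : (Function.uncurry h).FactorsThrough invariants := by
      rintro ⟨a, b⟩ ⟨a', b'⟩ hinv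
      obtain ⟨haa, hbb, hab⟩ : a ⬝ᵥ a = a' ⬝ᵥ a' ∧ b ⬝ᵥ b = b' ⬝ᵥ b' ∧ a ⬝ᵥ b = a' ⬝ᵥ b' := by
        simpa [invariants] using hinv
      obtain ⟨Q, hQ, rfl, rfl⟩ := exists_mem_orthogonalGroup_mulVec_eq_of_dotProduct_eq haa hbb hab
      exact (hiso Q ((mem_orthogonalGroup_iff' _ ℝ).mp hQ) a b).symm
    exact ⟨fun x y z => Function.extend invariants (Function.uncurry h) 0 (x, y, z),
      fun a b => (hfactor.extend_apply 0 (a, b)).symm⟩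
  · rintro ⟨H, hH⟩ Q hQ a b
    have hQ' : Q ∈ orthogonalGroup (Fin m) ℝ := (mem_orthogonalGroup_iff' _ ℝ).mpr hQ
    simp only [hH, dotProduct_mulVec_mulVec_of_mem_orthogonalGroup hQ']

/-- A scalar function `h` of two vectors in ℝᵐ (m ≥ 2) is isotropic with respect to
orthogonal transformations if and only if it can be written as a function of
`a·a`, `b·b` and `a·b`. -/
theorem isotropic_iff_function_of_invariants
    (m : ℕ) (hm : 2 ≤ m) (h : (Fin m → ℝ) → (Fin m → ℝ) → ℝ) :
    (∀ Q : Matrix (Fin m) (Fin m) ℝ, Qᵀ * Q = 1 →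
        ∀ a b : Fin m → ℝ, h (Q.mulVec a) (Q.mulVec b) = h a b) ↔
      (∃ H : ℝ → ℝ → ℝ → ℝ, ∀ a b : Fin m → ℝ, h a b = H (a ⬝ᵥ a) (b ⬝ᵥ b) (a ⬝ᵥ b)) :=
  isotropic_iff_function_of_invariants_general m h
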